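/- arXiv:2202.12958 — 4 statements merged into one kernel-verified Lean document; each statement's English description precedes it below -/
import Mathlib

section
/- Under the causal setup below, for every bounded measurable function μ̃ : 𝒲 → ℝ one has E[ T·(c − μ̃(W)) / e₁(W) + μ̃(W) ] = E[ c(1) ]. (Unbiasedness of the augmented inverse probability weighting (AIPW) score with the true propensity score and an arbitrary outcome model.) -/
/-! Since `T ∈ {0,1}`, the observed outcome satisfies `T c = T c(1)`. Conditioning on `W`,
ignorability factors `E[T c(1) | W] = e₁(W) E[c(1) | W]`, and since `μ̃(W)` is `W`-measurable
also `E[T (c(1) − μ̃(W)) | W] = e₁(W) E[c(1) − μ̃(W) | W]`. Overlap makes `1/e₁(W)` a bounded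
`W`-measurable weight that can be pulled out of the conditional expectation, where it cancels
`e₁(W)`; so the weighted term has mean `E[c(1)] − E[μ̃(W)]` and the augmentation term restores
`E[c(1)]`. The factorisation comes from the fibres of the conditional expectation kernel: on
countably generated codomains, conditional independence means independence under almost every
fibre. -/

open MeasureTheory ProbabilityTheory Filter

namespace ProbabilityTheory

variable {Ω β β' : Type*} {m mΩ : MeasurableSpace Ω} [StandardBorelSpace Ω] {hm : m ≤ mΩ}
  {μ : Measure Ω} [IsFiniteMeasure μ]

lemma CondIndepFun.ae_indepFun_condExpKernel {mβ : MeasurableSpace β} {mβ' : MeasurableSpace β'}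
    [MeasurableSpace.CountableOrCountablyGenerated Ω (β × β')] {f : Ω → β} {g : Ω → β'}
    (h : CondIndepFun m hm f g μ) (hf : Measurable f) (hg : Measurable g) :
    ∀ᵐ ω ∂μ, IndepFun f g (condExpKernel μ m ω) := by
  have h' := (condIndepFun_iff_map_prod_eq_prod_map_map hf hg).1 h
  filter_upwards [ae_of_ae_trim hm h'] with ω hω
  rw [indepFun_iff_map_prod_eq_prod_map_map hf.aemeasurable hg.aemeasurable]
  rwa [Kernel.prod_apply, Kernel.map_apply _ hf, Kernel.map_apply _ hg,
    Kernel.map_apply _ (hf.prodMk hg)] at hω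

lemma CondIndepFun.condExp_mul_ae_eq {f g : Ω → ℝ} (h : CondIndepFun m hm f g μ)
    (hf : Measurable f) (hg : Measurable g) (hfi : Integrable f μ) (hgi : Integrable g μ)
    (hfgi : Integrable (f * g) μ) :
    μ[f * g | m] =ᵐ[μ] μ[f | m] * μ[g | m] := by
  filter_upwards [condExp_ae_eq_integral_condExpKernel hm hfgi,
    condExp_ae_eq_integral_condExpKernel hm hfi, condExp_ae_eq_integral_condExpKernel hm hgi,
    h.ae_indepFun_condExpKernel hf hg] with ω hfg hf' hg' hω
  rw [hfg, Pi.mul_apply, hf', hg']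
  exact hω.integral_mul_eq_mul_integral hf.aestronglyMeasurable hg.aestronglyMeasurable

lemma CondIndepFun.condExp_sub_mul_ae_eq {X T Z : Ω → ℝ} {C : ℝ} (h : CondIndepFun m hm X T μ)
    (hXm : Measurable X) (hX : Integrable X μ) (hTm : Measurable T) (hT : ∀ᵐ ω ∂μ, ‖T ω‖ ≤ C)
    (hZm : StronglyMeasurable[m] Z) (hZ : Integrable Z μ) :
    μ[(X - Z) * T | m] =ᵐ[μ] μ[X - Z | m] * μ[T | m] := by
  have hTi : Integrable T μ := .of_bound hTm.aestronglyMeasurable C hT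
  have hXT : Integrable (X * T) μ := hX.mul_bdd hTm.aestronglyMeasurable hT
  have hZT : Integrable (Z * T) μ := hZ.mul_bdd hTm.aestronglyMeasurable hT
  have hXZ : μ[X - Z | m] =ᵐ[μ] μ[X | m] - Z :=
    (condExp_sub hX hZ m).trans (by rw [condExp_of_stronglyMeasurable hm hZm hZ])
  calc μ[(X - Z) * T | m] = μ[X * T - Z * T | m] := by rw [sub_mul]
    _ =ᵐ[μ] μ[X * T | m] - μ[Z * T | m] := condExp_sub hXT hZT m
    _ =ᵐ[μ] μ[X | m] * μ[T | m] - Z * μ[T | m] :=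
      (h.condExp_mul_ae_eq hXm hTm hX hTi hXT).sub
        (condExp_mul_of_stronglyMeasurable_left hZm hZT hTi)
    _ = (μ[X | m] - Z) * μ[T | m] := by rw [sub_mul]
    _ =ᵐ[μ] μ[X - Z | m] * μ[T | m] := hXZ.symm.mul .rfl

end ProbabilityTheory

namespace MeasureTheory

variable {Ω : Type*} {mΩ : MeasurableSpace Ω} {μ : Measure Ω}

lemma Integrable.div_of_ae_le {f e : Ω → ℝ} {η : ℝ} (hf : Integrable f μ)
    (he : AEStronglyMeasurable e μ) (hη : 0 < η) (he_ge : ∀ᵐ ω ∂μ, η ≤ e ω) :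
    Integrable (f / e) μ := by
  have hinv : ∀ᵐ ω ∂μ, ‖(e ω)⁻¹‖ ≤ η⁻¹ := he_ge.mono fun ω hω => by
    rw [norm_inv, Real.norm_of_nonneg (hη.le.trans hω)]
    exact inv_anti₀ hη hω
  rw [div_eq_mul_inv]
  exact hf.mul_bdd he.aemeasurable.inv.aestronglyMeasurable hinv

lemma integral_mul_div_eq_of_condExp_mul_ae_eq {m : MeasurableSpace Ω} (hm : m ≤ mΩ)
    [IsFiniteMeasure μ] {Y T e : Ω → ℝ} {η : ℝ} (hYT : μ[Y * T | m] =ᵐ[μ] μ[Y | m] * μ[T | m])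
    (hYTi : Integrable (Y * T) μ) (hem : Measurable[m] e) (he : μ[T | m] =ᵐ[μ] e)
    (hη : 0 < η) (he_ge : ∀ᵐ ω ∂μ, η ≤ e ω) :
    ∫ ω, Y ω * T ω / e ω ∂μ = ∫ ω, Y ω ∂μ := by
  have he_pos : ∀ᵐ ω ∂μ, 0 < e ω := he_ge.mono fun ω hω => hη.trans_le hω
  have hYTe : Integrable (e⁻¹ * (Y * T)) μ := by
    rw [inv_mul_eq_div]
    exact hYTi.div_of_ae_le (hem.mono hm le_rfl).aestronglyMeasurable hη he_ge
  calc ∫ ω, Y ω * T ω / e ω ∂μ = ∫ ω, (e⁻¹ * (Y * T)) ω ∂μ := by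
        simp only [Pi.mul_apply, Pi.inv_apply, inv_mul_eq_div]
    _ = ∫ ω, (μ[e⁻¹ * (Y * T) | m]) ω ∂μ := (integral_condExp hm).symm
    _ = ∫ ω, (e⁻¹ * (μ[Y | m] * e)) ω ∂μ := integral_congr_ae <|
        (condExp_mul_of_stronglyMeasurable_left hem.inv.stronglyMeasurable hYTe hYTi).trans
          (EventuallyEq.rfl.mul (hYT.trans (EventuallyEq.rfl.mul he)))
    _ = ∫ ω, (μ[Y | m]) ω ∂μ := integral_congr_ae <| he_pos.mono fun ω hω => by
        simp only [Pi.mul_apply, Pi.inv_apply]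
        field_simp
    _ = ∫ ω, Y ω ∂μ := integral_condExp hm

end MeasureTheory

theorem aipw_unbiased_true_propensity_general
    {Ω 𝒲 : Type*} [MeasurableSpace Ω] [StandardBorelSpace Ω] [MeasurableSpace 𝒲]
    (μ : Measure Ω) [IsProbabilityMeasure μ]
    (W : Ω → 𝒲) (hW : Measurable W)
    (T : Ω → ℝ) (hTm : Measurable T) (hT01 : ∀ ω, T ω = 0 ∨ T ω = 1)
    (c0 c1 : Ω → ℝ) (hc1m : Measurable c1)
    (hc1 : Integrable c1 μ)
    -- Ignorability: (c(0), c(1)) ⫫ T | W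
    (hindep : CondIndepFun (MeasurableSpace.comap W inferInstance)
      (measurable_iff_comap_le.mp hW) (fun ω => (c0 ω, c1 ω)) T μ)
    -- Propensity score: e₁(W) is a version of E[T | W]
    (e1 : 𝒲 → ℝ) (he1m : Measurable e1)
    (he1 : μ[T | MeasurableSpace.comap W inferInstance] =ᵐ[μ] fun ω => e1 (W ω))
    -- Overlap
    (η : ℝ) (hη0 : 0 < η)
    (hover : ∀ᵐ ω ∂μ, η ≤ e1 (W ω) ∧ e1 (W ω) ≤ 1 - η) :
    ∀ μtil : 𝒲 → ℝ, Measurable μtil → (∃ B : ℝ, ∀ w, |μtil w| ≤ B) →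
      ∫ ω, (T ω * (T ω * c1 ω + (1 - T ω) * c0 ω - μtil (W ω)) / e1 (W ω) + μtil (W ω)) ∂μ
        = ∫ ω, c1 ω ∂μ := by
  rintro μtil hμtil ⟨B, hB⟩
  set Z : Ω → ℝ := fun ω => μtil (W ω)
  have hT : ∀ᵐ ω ∂μ, ‖T ω‖ ≤ 1 := .of_forall fun ω => by rcases hT01 ω with h | h <;> simp [h]
  have hZm : Measurable[MeasurableSpace.comap W inferInstance] Z :=
    hμtil.comp (comap_measurable W)
  have hZ : Integrable Z μ :=
    .of_bound (hμtil.comp hW).aestronglyMeasurable B (.of_forall fun ω => hB (W ω))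
  have hYTi : Integrable ((c1 - Z) * T) μ := (hc1.sub hZ).mul_bdd hTm.aestronglyMeasurable hT
  have he_ge : ∀ᵐ ω ∂μ, η ≤ e1 (W ω) := hover.mono fun _ h => h.1
  have hc1T : CondIndepFun _ hW.comap_le c1 T μ := hindep.comp measurable_snd measurable_id
  have hIPW : ∫ ω, (c1 ω - Z ω) * T ω / e1 (W ω) ∂μ = ∫ ω, c1 ω - Z ω ∂μ :=
    integral_mul_div_eq_of_condExp_mul_ae_eq hW.comap_le
      (hc1T.condExp_sub_mul_ae_eq hc1m hc1 hTm hT hZm.stronglyMeasurable hZ)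
      hYTi (he1m.comp (comap_measurable W)) he1 hη0 he_ge
  have hIPWi : Integrable (fun ω => (c1 ω - Z ω) * T ω / e1 (W ω)) μ :=
    hYTi.div_of_ae_le (he1m.comp hW).aestronglyMeasurable hη0 he_ge
  calc _ = ∫ ω, ((c1 ω - Z ω) * T ω / e1 (W ω) + Z ω) ∂μ := by
        congr 1 with ω
        rcases hT01 ω with h | h <;> simp [h, Z]
    _ = ∫ ω, c1 ω ∂μ := by
        rw [integral_add hIPWi hZ, hIPW, integral_sub hc1 hZ, sub_add_cancel]

/-- **AIPW unbiasedness with the true propensity score.** Under ignorability and overlap,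
for every bounded measurable outcome model `μ̃ : 𝒲 → ℝ`,
`E[T (c − μ̃(W))/e₁(W) + μ̃(W)] = E[c(1)]`, where `c = T c(1) + (1−T) c(0)`. -/
theorem aipw_unbiased_true_propensity
    {Ω 𝒲 : Type*} [MeasurableSpace Ω] [StandardBorelSpace Ω] [MeasurableSpace 𝒲]
    (μ : Measure Ω) [IsProbabilityMeasure μ]
    (W : Ω → 𝒲) (hW : Measurable W)
    (T : Ω → ℝ) (hTm : Measurable T) (hT01 : ∀ ω, T ω = 0 ∨ T ω = 1)
    (c0 c1 : Ω → ℝ) (hc0m : Measurable c0) (hc1m : Measurable c1)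
    (hc0 : Integrable c0 μ) (hc1 : Integrable c1 μ)
    -- Ignorability: (c(0), c(1)) ⫫ T | W
    (hindep : CondIndepFun (MeasurableSpace.comap W inferInstance)
      (measurable_iff_comap_le.mp hW) (fun ω => (c0 ω, c1 ω)) T μ)
    -- Propensity score: e₁(W) is a version of E[T | W]
    (e1 : 𝒲 → ℝ) (he1m : Measurable e1)
    (he1 : μ[T | MeasurableSpace.comap W inferInstance] =ᵐ[μ] fun ω => e1 (W ω))
    -- Overlap
    (η : ℝ) (hη0 : 0 < η) (hη2 : η < 1 / 2)
    (hover : ∀ᵐ ω ∂μ, η ≤ e1 (W ω) ∧ e1 (W ω) ≤ 1 - η) :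
    ∀ μtil : 𝒲 → ℝ, Measurable μtil → (∃ B : ℝ, ∀ w, |μtil w| ≤ B) →
      ∫ ω, (T ω * (T ω * c1 ω + (1 - T ω) * c0 ω - μtil (W ω)) / e1 (W ω) + μtil (W ω)) ∂μ
        = ∫ ω, c1 ω ∂μ :=
  aipw_unbiased_true_propensity_general μ W hW T hTm hT01 c0 c1 hc1m hc1 hindep e1 he1m he1 η hη0
    hover
end

section
/- Under the causal setup below, let μ₁(W) = E[c(1) | W] be a version of the true conditional outcome mean, and let ẽ : 𝒲 → ℝ be any measurable function with ẽ(W) ≥ η' almost surely for some constant η' > 0, such that T·(c − μ₁(W))/ẽ(W) is integrable. Then E[ T·(c − μ₁(W)) / ẽ(W) + μ₁(W) ] = E[ c(1) ]. (Unbiasedness of the AIPW score with the true outcome model and an arbitrary weighting function: together with the previous direction this is double robustness.) -/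
open MeasureTheory ProbabilityTheory

/-!
As `T ∈ {0, 1}`, `T c = T c(1)`, so up to the term `μ₁(W)` the score is
`ẽ(W)⁻¹ · T (c(1) − E[c(1) | W])`. Conditional independence of `c(1)` and `T` given `W` gives
`E[T c(1) | W] = E[T | W] E[c(1) | W]`, hence `E[T (c(1) − E[c(1) | W]) | W] = 0`; pulling out
the `W`-measurable factor `ẽ(W)⁻¹` shows that this part of the score has mean zero, and
`E[μ₁(W)] = E[E[c(1) | W]] = E[c(1)]`.

Since `T` is the indicator of `{T = 1}`, the product rule only needs conditional independence of
sets. For `S` in the conditioning σ-algebra `m`, the function `1_S (1_B − P(B | m))` integrates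
to zero over every `σ(X)`-set, so it is orthogonal to `X`; this upgrades the set identity to
`E[X 1_B | m] = E[X | m] P(B | m)` for integrable `X`.
-/

section

variable {Ω : Type*} {m mΩ : MeasurableSpace Ω} {μ : Measure Ω}

theorem mul_indicator_one_eq_indicator (f : Ω → ℝ) (A : Set Ω) :
    (f * A.indicator fun _ => 1) = A.indicator f := by
  ext ω
  simp only [Pi.mul_apply, ← Set.indicator_mul_right, mul_one]

theorem ae_norm_condExp_indicator_le_one (B : Set Ω) : ∀ᵐ ω ∂μ, ‖(μ⟦B | m⟧) ω‖ ≤ 1 := by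
  have h := ae_bdd_abs_condExp_of_ae_bdd_abs (m := m) (μ := μ) (R := (1 : ℝ))
    (f := B.indicator fun _ => (1 : ℝ)) (Filter.Eventually.of_forall fun ω => by
      by_cases hω : ω ∈ B <;> simp [hω])
  simpa using h

theorem MeasureTheory.Integrable.mul_of_forall_eq_zero_or_one {f T : Ω → ℝ} (hf : Integrable f μ)
    (hT : Measurable T) (hT01 : ∀ ω, T ω = 0 ∨ T ω = 1) : Integrable (T * f) μ :=
  hf.bdd_mul (c := 1) hT.aestronglyMeasurable
    (Filter.Eventually.of_forall fun ω => by rcases hT01 ω with h | h <;> simp [h])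

variable [IsFiniteMeasure μ]

theorem integral_mul_eq_zero_of_condExp_eq_zero (hm : m ≤ mΩ) {f g : Ω → ℝ}
    (hf : StronglyMeasurable[m] f) (hfg : Integrable (f * g) μ) (hg : Integrable g μ)
    (hg0 : μ[g | m] =ᵐ[μ] 0) : ∫ ω, (f * g) ω ∂μ = 0 := by
  rw [← integral_condExp hm]
  refine integral_eq_zero_of_ae ?_
  filter_upwards [condExp_mul_of_stronglyMeasurable_left hf hfg hg, hg0] with ω hfg hg0
  simp [hfg, hg0]

theorem setIntegral_mul_condExp_indicator (hm : m ≤ mΩ) {f : Ω → ℝ} {S A : Set Ω}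
    (hf : StronglyMeasurable[m] f) (hfi : Integrable f μ) (hS : MeasurableSet[m] S)
    (hA : MeasurableSet A) :
    ∫ ω in S, f ω * (μ⟦A | m⟧) ω ∂μ = ∫ ω in S ∩ A, f ω ∂μ := by
  have hfA : Integrable (f * A.indicator fun _ => 1) μ := by
    rw [mul_indicator_one_eq_indicator]
    exact hfi.indicator hA
  have hpull : μ[f * A.indicator fun _ => 1 | m] =ᵐ[μ] f * μ⟦A | m⟧ :=
    condExp_mul_of_stronglyMeasurable_left hf hfA ((integrable_const 1).indicator hA)
  calc ∫ ω in S, f ω * (μ⟦A | m⟧) ω ∂μ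
      = ∫ ω in S, (μ[f * A.indicator fun _ => 1 | m]) ω ∂μ :=
        setIntegral_congr_ae (hm S hS) (hpull.mono fun ω hω _ => hω.symm)
    _ = ∫ ω in S, A.indicator f ω ∂μ := by
        rw [setIntegral_condExp hm hfA hS, mul_indicator_one_eq_indicator]
    _ = ∫ ω in S ∩ A, f ω ∂μ := setIntegral_indicator hA

theorem setIntegral_inter_indicator_eq_condExp {S A B : Set Ω} (hm : m ≤ mΩ)
    (hS : MeasurableSet[m] S) (hA : MeasurableSet A) (hB : MeasurableSet B)
    (hAB : μ⟦A ∩ B | m⟧ =ᵐ[μ] μ⟦A | m⟧ * μ⟦B | m⟧) :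
    ∫ ω in S ∩ A, B.indicator (fun _ => (1 : ℝ)) ω ∂μ = ∫ ω in S ∩ A, (μ⟦B | m⟧) ω ∂μ := by
  calc ∫ ω in S ∩ A, B.indicator (fun _ => (1 : ℝ)) ω ∂μ
      = ∫ ω in S, (A ∩ B).indicator (fun _ => (1 : ℝ)) ω ∂μ := by
        rw [← Set.indicator_indicator, setIntegral_indicator hA]
    _ = ∫ ω in S, (μ⟦B | m⟧) ω * (μ⟦A | m⟧) ω ∂μ := by
        rw [← setIntegral_condExp hm ((integrable_const 1).indicator (hA.inter hB)) hS]
        refine setIntegral_congr_ae (hm S hS) (hAB.mono fun ω hω _ => ?_)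
        rw [hω, Pi.mul_apply, mul_comm]
    _ = ∫ ω in S ∩ A, (μ⟦B | m⟧) ω ∂μ :=
        setIntegral_mul_condExp_indicator hm stronglyMeasurable_condExp integrable_condExp hS hA

theorem setIntegral_mul_indicator_eq_mul_condExp (hm : m ≤ mΩ) {X : Ω → ℝ} {S B : Set Ω}
    (hX : Measurable X) (hXi : Integrable X μ) (hS : MeasurableSet[m] S) (hB : MeasurableSet B)
    (hXB : ∀ u, MeasurableSet u → μ⟦X ⁻¹' u ∩ B | m⟧ =ᵐ[μ] μ⟦X ⁻¹' u | m⟧ * μ⟦B | m⟧) :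
    ∫ ω in S, X ω * B.indicator (fun _ => (1 : ℝ)) ω ∂μ = ∫ ω in S, X ω * (μ⟦B | m⟧) ω ∂μ := by
  set g : Ω → ℝ := S.indicator (B.indicator (fun _ => 1) - μ⟦B | m⟧)
  have hXB_int : Integrable (fun ω => X ω * B.indicator (fun _ => (1 : ℝ)) ω) μ :=
    hXi.mul_bdd (c := 1) ((aestronglyMeasurable_const.indicator hB))
      (Filter.Eventually.of_forall fun ω => by by_cases hω : ω ∈ B <;> simp [hω])
  have hXp_int : Integrable (fun ω => X ω * (μ⟦B | m⟧) ω) μ :=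
    hXi.mul_bdd (stronglyMeasurable_condExp.mono hm).aestronglyMeasurable
      (ae_norm_condExp_indicator_le_one B)
  have hg_int : Integrable g μ :=
    (((integrable_const 1).indicator hB).sub integrable_condExp).indicator (hm S hS)
  have hg0 : μ[g | MeasurableSpace.comap X inferInstance] =ᵐ[μ] 0 := by
    refine (ae_eq_condExp_of_forall_setIntegral_eq hX.comap_le hg_int
      (fun _ _ _ => integrableOn_zero) ?_ aestronglyMeasurable_zero).symm
    rintro _ ⟨u, hu, rfl⟩ -
    rw [setIntegral_indicator (hm S hS), Set.inter_comm, Pi.sub_def,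
      integral_sub ((integrable_const (1 : ℝ)).indicator hB).integrableOn
        integrable_condExp.integrableOn,
      setIntegral_inter_indicator_eq_condExp hm hS (hX hu) hB (hXB u hu), sub_self, integral_zero]
  have hXg : X * g = S.indicator fun ω =>
      X ω * B.indicator (fun _ => (1 : ℝ)) ω - X ω * (μ⟦B | m⟧) ω := by
    ext ω
    by_cases hω : ω ∈ S <;> simp [g, hω, mul_sub]
  have hXg0 := integral_mul_eq_zero_of_condExp_eq_zero hX.comap_le
    (comap_measurable X).stronglyMeasurable
    (hXg ▸ (hXB_int.sub hXp_int).indicator (hm S hS)) hg_int hg0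
  rwa [hXg, integral_indicator (hm S hS), integral_sub hXB_int.integrableOn hXp_int.integrableOn,
    sub_eq_zero] at hXg0

theorem condExp_mul_indicator_eq_of_condExp_inter_eq_mul (hm : m ≤ mΩ) {X : Ω → ℝ} {B : Set Ω}
    (hX : Measurable X) (hXi : Integrable X μ) (hB : MeasurableSet B)
    (hXB : ∀ u, MeasurableSet u → μ⟦X ⁻¹' u ∩ B | m⟧ =ᵐ[μ] μ⟦X ⁻¹' u | m⟧ * μ⟦B | m⟧) :
    μ[X * B.indicator (fun _ => 1) | m] =ᵐ[μ] μ[X | m] * μ⟦B | m⟧ := by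
  have hpX : Integrable (μ⟦B | m⟧ * X) μ :=
    hXi.bdd_mul (stronglyMeasurable_condExp.mono hm).aestronglyMeasurable
      (ae_norm_condExp_indicator_le_one B)
  have hpull : μ[μ⟦B | m⟧ * X | m] =ᵐ[μ] μ⟦B | m⟧ * μ[X | m] :=
    condExp_stronglyMeasurable_mul_of_bound hm stronglyMeasurable_condExp hXi 1
      (ae_norm_condExp_indicator_le_one B)
  refine (ae_eq_condExp_of_forall_setIntegral_eq hm
    ((mul_indicator_one_eq_indicator X B).symm ▸ hXi.indicator hB)
    (fun S _ _ => (integrable_condExp.mul_bdd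
      (stronglyMeasurable_condExp.mono hm).aestronglyMeasurable
      (ae_norm_condExp_indicator_le_one B)).integrableOn)
    (fun S hS _ => ?_)
    (stronglyMeasurable_condExp.mul stronglyMeasurable_condExp).aestronglyMeasurable).symm
  calc ∫ ω in S, (μ[X | m] * μ⟦B | m⟧) ω ∂μ
      = ∫ ω in S, (μ[μ⟦B | m⟧ * X | m]) ω ∂μ :=
        setIntegral_congr_ae (hm S hS) (hpull.mono fun ω hω _ => by rw [hω, mul_comm])
    _ = ∫ ω in S, X ω * (μ⟦B | m⟧) ω ∂μ := by
        rw [setIntegral_condExp hm hpX hS]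
        simp only [Pi.mul_apply, mul_comm]
    _ = ∫ ω in S, (X * B.indicator (fun _ => (1 : ℝ))) ω ∂μ :=
        (setIntegral_mul_indicator_eq_mul_condExp hm hX hXi hS hB hXB).symm

theorem condExp_mul_eq_mul_condExp_of_condIndepFun [StandardBorelSpace Ω] {hm : m ≤ mΩ}
    {X T : Ω → ℝ} (hX : Measurable X) (hXi : Integrable X μ) (hT : Measurable T)
    (hT01 : ∀ ω, T ω = 0 ∨ T ω = 1) (hXT : CondIndepFun m hm X T μ) :
    μ[T * X | m] =ᵐ[μ] μ[T | m] * μ[X | m] := by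
  have hT_eq : T = (T ⁻¹' {1}).indicator fun _ => 1 := by
    ext ω
    rcases hT01 ω with h | h <;> simp [h]
  rw [mul_comm T, hT_eq]
  refine (condExp_mul_indicator_eq_of_condExp_inter_eq_mul hm hX hXi
    (hT (measurableSet_singleton 1)) fun u hu => ?_).trans (.of_eq (mul_comm _ _))
  exact (condIndepFun_iff_condExp_inter_preimage_eq_mul hX hT).mp hXT u {1} hu
    (measurableSet_singleton 1)

theorem condExp_mul_sub_condExp_eq_zero_of_condIndepFun [StandardBorelSpace Ω] {hm : m ≤ mΩ}
    {X T : Ω → ℝ} (hX : Measurable X) (hXi : Integrable X μ) (hT : Measurable T)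
    (hT01 : ∀ ω, T ω = 0 ∨ T ω = 1) (hXT : CondIndepFun m hm X T μ) :
    μ[T * (X - μ[X | m]) | m] =ᵐ[μ] 0 := by
  have hTX := hXi.mul_of_forall_eq_zero_or_one hT hT01
  have hTc := (integrable_condExp (m := m) (μ := μ) (f := X)).mul_of_forall_eq_zero_or_one hT hT01
  have hTi : Integrable T μ := by
    simpa [Pi.mul_def] using
      (integrable_const (μ := μ) (1 : ℝ)).mul_of_forall_eq_zero_or_one hT hT01
  filter_upwards [condExp_sub hTX hTc m,
    condExp_mul_eq_mul_condExp_of_condIndepFun hX hXi hT hT01 hXT,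
    condExp_mul_of_stronglyMeasurable_right stronglyMeasurable_condExp hTc hTi]
    with ω h_sub h_indep h_pull
  rw [mul_sub, h_sub, Pi.sub_apply, h_indep, h_pull, sub_self, Pi.zero_apply]

end

theorem aipw_unbiased_true_outcome_model_general
    {Ω 𝒲 : Type*} [MeasurableSpace Ω] [StandardBorelSpace Ω] [MeasurableSpace 𝒲]
    (μ : Measure Ω) [IsProbabilityMeasure μ]
    (W : Ω → 𝒲) (hW : Measurable W)
    (T : Ω → ℝ) (hTm : Measurable T) (hT01 : ∀ ω, T ω = 0 ∨ T ω = 1)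
    (c0 c1 : Ω → ℝ) (hc1m : Measurable c1)
    (hc1 : Integrable c1 μ)
    -- Ignorability: (c(0), c(1)) ⫫ T | W
    (hindep : CondIndepFun (MeasurableSpace.comap W inferInstance)
      (measurable_iff_comap_le.mp hW) (fun ω => (c0 ω, c1 ω)) T μ)
    -- μ₁(W) is a measurable version of the conditional mean E[c(1) | W]
    (μ₁ : 𝒲 → ℝ)
    (hμ₁ : μ[c1 | MeasurableSpace.comap W inferInstance] =ᵐ[μ] fun ω => μ₁ (W ω))
    -- arbitrary weighting function bounded away from zero
    (etil : 𝒲 → ℝ) (hetilm : Measurable etil)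
    (hint : Integrable
      (fun ω => T ω * (T ω * c1 ω + (1 - T ω) * c0 ω - μ₁ (W ω)) / etil (W ω)) μ) :
    ∫ ω, (T ω * (T ω * c1 ω + (1 - T ω) * c0 ω - μ₁ (W ω)) / etil (W ω) + μ₁ (W ω)) ∂μ
      = ∫ ω, c1 ω ∂μ := by
  set m := MeasurableSpace.comap W inferInstance
  have hm : m ≤ _ := hW.comap_le
  have hres : μ[T * (c1 - μ[c1 | m]) | m] =ᵐ[μ] 0 :=
    condExp_mul_sub_condExp_eq_zero_of_condIndepFun hc1m hc1 hTm hT01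
      (hindep.comp measurable_snd measurable_id)
  have hk : StronglyMeasurable[m] fun ω => (etil (W ω))⁻¹ :=
    (hetilm.comp (comap_measurable W)).inv.stronglyMeasurable
  have hscore : (fun ω => T ω * (T ω * c1 ω + (1 - T ω) * c0 ω - μ₁ (W ω)) / etil (W ω))
      =ᵐ[μ] (fun ω => (etil (W ω))⁻¹) * (T * (c1 - μ[c1 | m])) := by
    filter_upwards [hμ₁] with ω hω
    rcases hT01 ω with h | h <;> simp [h, hω, div_eq_inv_mul]
  rw [integral_add hint (integrable_condExp.congr hμ₁), integral_congr_ae hscore,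
    integral_mul_eq_zero_of_condExp_eq_zero hm hk (hint.congr hscore)
      ((hc1.sub integrable_condExp).mul_of_forall_eq_zero_or_one hTm hT01) hres, zero_add,
    ← integral_congr_ae hμ₁, integral_condExp hm]

/-- **AIPW unbiasedness with the true outcome model.** Under ignorability and overlap, if
`μ₁(W)` is a version of `E[c(1) | W]` and `ẽ : 𝒲 → ℝ` is measurable with `ẽ(W) ≥ η' > 0`
a.s. and `T (c − μ₁(W)) / ẽ(W)` is integrable, then
`E[T (c − μ₁(W))/ẽ(W) + μ₁(W)] = E[c(1)]`, where `c = T c(1) + (1−T) c(0)`. -/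
theorem aipw_unbiased_true_outcome_model
    {Ω 𝒲 : Type*} [MeasurableSpace Ω] [StandardBorelSpace Ω] [MeasurableSpace 𝒲]
    (μ : Measure Ω) [IsProbabilityMeasure μ]
    (W : Ω → 𝒲) (hW : Measurable W)
    (T : Ω → ℝ) (hTm : Measurable T) (hT01 : ∀ ω, T ω = 0 ∨ T ω = 1)
    (c0 c1 : Ω → ℝ) (hc0m : Measurable c0) (hc1m : Measurable c1)
    (hc0 : Integrable c0 μ) (hc1 : Integrable c1 μ)
    -- Ignorability: (c(0), c(1)) ⫫ T | W
    (hindep : CondIndepFun (MeasurableSpace.comap W inferInstance)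
      (measurable_iff_comap_le.mp hW) (fun ω => (c0 ω, c1 ω)) T μ)
    -- Propensity score: e₁(W) is a version of E[T | W]
    (e1 : 𝒲 → ℝ) (he1m : Measurable e1)
    (he1 : μ[T | MeasurableSpace.comap W inferInstance] =ᵐ[μ] fun ω => e1 (W ω))
    -- Overlap
    (η : ℝ) (hη0 : 0 < η) (hη2 : η < 1 / 2)
    (hover : ∀ᵐ ω ∂μ, η ≤ e1 (W ω) ∧ e1 (W ω) ≤ 1 - η)
    -- μ₁(W) is a measurable version of the conditional mean E[c(1) | W]
    (μ₁ : 𝒲 → ℝ) (hμ₁m : Measurable μ₁)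
    (hμ₁ : μ[c1 | MeasurableSpace.comap W inferInstance] =ᵐ[μ] fun ω => μ₁ (W ω))
    -- arbitrary weighting function bounded away from zero
    (etil : 𝒲 → ℝ) (hetilm : Measurable etil)
    (η' : ℝ) (hη' : 0 < η') (hetil : ∀ᵐ ω ∂μ, η' ≤ etil (W ω))
    (hint : Integrable
      (fun ω => T ω * (T ω * c1 ω + (1 - T ω) * c0 ω - μ₁ (W ω)) / etil (W ω)) μ) :
    ∫ ω, (T ω * (T ω * c1 ω + (1 - T ω) * c0 ω - μ₁ (W ω)) / etil (W ω) + μ₁ (W ω)) ∂μ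
      = ∫ ω, c1 ω ∂μ :=
  aipw_unbiased_true_outcome_model_general μ W hW T hTm hT01 c0 c1 hc1m hc1 hindep μ₁ hμ₁ etil
    hetilm hint
end

section
/- Let S ⊆ ℝ^m be a finite set, P = conv(S), θ* ∈ ℝ^p, and g : ℝ^p → ℝ^m continuously differentiable with bounded derivative. Let δ : Ω → ℝ^p be a bounded measurable random vector on a probability space. Let I ⊆ ℝ be an open interval and suppose that for every ε ∈ I and almost every ω, the linear objective x ↦ ⟨x, g(θ* + ε δ(ω))⟩ has a unique minimizer x(θ* + ε δ(ω)) over P (which is then an almost-everywhere-defined measurable selection). Then the expected value function φ(ε) = E[ min_{x∈P} ⟨x, g(θ* + εδ)⟩ ] is differentiable at every ε ∈ I, with φ'(ε) = E[ ⟨ x(θ* + εδ), Dg(θ* + εδ) δ ⟩ ]. -/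
/-! The value `V c = min_{y ∈ conv S} ⟪y, c⟫` of a linear program over a polytope is attained at
a vertex, so it is a minimum of finitely many linear functions and hence Lipschitz in `c`. A unique
minimizer `x₀` must be a vertex beating every other vertex strictly; by continuity this persists
near `c`, so `V = ⟪x₀, ·⟫` there and `∇V(c) = x₀`. Composed with `e ↦ g (θ + e • δ)`, the
integrands are uniformly Lipschitz in `e` and a.s. differentiable at `ε`, and dominated convergence
differentiates under the integral. -/

open MeasureTheory RealInnerProductSpace Filter Topology NNReal

section LinearProgram

variable {E : Type*} [NormedAddCommGroup E] [InnerProductSpace ℝ E] {S : Set E} {x₀ c : E}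

/-- `sInf` makes this `0` when `K = ∅` or the objective is unbounded below on `K`. -/
noncomputable def infInner (K : Set E) (c : E) : ℝ := sInf ((fun y => ⟪y, c⟫) '' K)

theorem exists_inner_le_of_mem_convexHull {y : E} (hy : y ∈ convexHull ℝ S) (c : E) :
    ∃ s ∈ S, ⟪s, c⟫ ≤ ⟪y, c⟫ := by
  simpa [real_inner_comm c] using
    ((innerSL ℝ c).toLinearMap.concaveOn convex_univ).exists_le_of_mem_convexHull
      (Set.subset_univ S) hy

theorem isLeast_inner_image_convexHull (hx₀ : x₀ ∈ S) (h : ∀ s ∈ S, ⟪x₀, c⟫ ≤ ⟪s, c⟫) :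
    IsLeast ((fun y => ⟪y, c⟫) '' convexHull ℝ S) ⟪x₀, c⟫ := by
  refine ⟨⟨x₀, subset_convexHull ℝ S hx₀, rfl⟩, ?_⟩
  rintro _ ⟨y, hy, rfl⟩
  obtain ⟨s, hs, hsy⟩ := exists_inner_le_of_mem_convexHull hy c
  exact (h s hs).trans hsy

theorem infInner_convexHull_eq (hx₀ : x₀ ∈ S) (h : ∀ s ∈ S, ⟪x₀, c⟫ ≤ ⟪s, c⟫) :
    infInner (convexHull ℝ S) c = ⟪x₀, c⟫ :=
  (isLeast_inner_image_convexHull hx₀ h).csInf_eq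

theorem infInner_convexHull_le (hS : S.Finite) {s : E} (hs : s ∈ S) (c : E) :
    infInner (convexHull ℝ S) c ≤ ⟪s, c⟫ := by
  obtain ⟨t, ht, hmin⟩ := S.exists_min_image (fun t => ⟪t, c⟫) hS ⟨s, hs⟩
  exact (infInner_convexHull_eq ht hmin).trans_le (hmin s hs)

theorem lipschitzWith_infInner_convexHull (hS : S.Finite) {R : ℝ≥0} (hR : ∀ s ∈ S, ‖s‖ ≤ R) :
    LipschitzWith R (infInner (convexHull ℝ S)) := by
  rcases S.eq_empty_or_nonempty with rfl | hne
  · convert (LipschitzWith.const (α := E) (0 : ℝ)).weaken (zero_le (a := R)) using 1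
    ext c
    simp [infInner]
  refine LipschitzWith.of_le_add_mul R fun c c' => ?_
  obtain ⟨s, hs, hmin⟩ := S.exists_min_image (fun t => ⟪t, c'⟫) hS hne
  calc infInner (convexHull ℝ S) c ≤ ⟪s, c⟫ := infInner_convexHull_le hS hs c
    _ = ⟪s, c'⟫ + ⟪s, c - c'⟫ := by rw [inner_sub_right]; ring
    _ ≤ infInner (convexHull ℝ S) c' + R * dist c c' := by
      rw [infInner_convexHull_eq hs hmin, dist_eq_norm]
      gcongr
      exact (real_inner_le_norm s _).trans (mul_le_mul_of_nonneg_right (hR s hs) (norm_nonneg _))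

theorem mem_of_isMinOn_inner_convexHull_unique (hx₀ : x₀ ∈ convexHull ℝ S)
    (hmin : IsMinOn (fun y => ⟪y, c⟫) (convexHull ℝ S) x₀)
    (huniq : ∀ y ∈ convexHull ℝ S, IsMinOn (fun y => ⟪y, c⟫) (convexHull ℝ S) y → y = x₀) :
    x₀ ∈ S := by
  obtain ⟨s, hs, hsx⟩ := exists_inner_le_of_mem_convexHull hx₀ c
  have hs_min : IsMinOn (fun y => ⟪y, c⟫) (convexHull ℝ S) s :=
    isMinOn_iff.2 fun z hz => hsx.trans (isMinOn_iff.1 hmin z hz)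
  exact huniq s (subset_convexHull ℝ S hs) hs_min ▸ hs

theorem inner_lt_of_isMinOn_inner_convexHull_unique
    (hmin : IsMinOn (fun y => ⟪y, c⟫) (convexHull ℝ S) x₀)
    (huniq : ∀ y ∈ convexHull ℝ S, IsMinOn (fun y => ⟪y, c⟫) (convexHull ℝ S) y → y = x₀)
    {s : E} (hs : s ∈ S) (hsx : s ≠ x₀) : ⟪x₀, c⟫ < ⟪s, c⟫ := by
  have hs' := subset_convexHull ℝ S hs
  refine (isMinOn_iff.1 hmin s hs').lt_of_ne fun heq => hsx (huniq s hs' ?_)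
  exact isMinOn_iff.2 fun z hz => heq ▸ isMinOn_iff.1 hmin z hz

theorem infInner_convexHull_eventuallyEq (hS : S.Finite) (hx₀ : x₀ ∈ S)
    (hlt : ∀ s ∈ S, s ≠ x₀ → ⟪x₀, c⟫ < ⟪s, c⟫) :
    infInner (convexHull ℝ S) =ᶠ[𝓝 c] fun c' => ⟪x₀, c'⟫ := by
  have hmin : ∀ᶠ c' in 𝓝 c, ∀ s ∈ S, ⟪x₀, c'⟫ ≤ ⟪s, c'⟫ := by
    refine hS.eventually_all.2 fun s hs => ?_
    rcases eq_or_ne s x₀ with rfl | hsx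
    · exact Eventually.of_forall fun _ => le_rfl
    · have hcont : ∀ y : E, Continuous fun c' : E => ⟪y, c'⟫ := fun y => by fun_prop
      exact ((hcont x₀).continuousAt.eventually_lt (hcont s).continuousAt
        (hlt s hs hsx)).mono fun _ => le_of_lt
  exact hmin.mono fun c' h => infInner_convexHull_eq hx₀ h

/-- Danskin's theorem over a polytope. -/
theorem hasFDerivAt_infInner_convexHull (hS : S.Finite) (hx₀ : x₀ ∈ convexHull ℝ S)
    (hmin : IsMinOn (fun y => ⟪y, c⟫) (convexHull ℝ S) x₀)
    (huniq : ∀ y ∈ convexHull ℝ S, IsMinOn (fun y => ⟪y, c⟫) (convexHull ℝ S) y → y = x₀) :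
    HasFDerivAt (infInner (convexHull ℝ S)) (innerSL ℝ x₀) c := by
  have hx₀S := mem_of_isMinOn_inner_convexHull_unique hx₀ hmin huniq
  have hlt s hs hsx := inner_lt_of_isMinOn_inner_convexHull_unique hmin huniq (s := s) hs hsx
  exact (innerSL ℝ x₀).hasFDerivAt.congr_of_eventuallyEq
    (infInner_convexHull_eventuallyEq hS hx₀S hlt)

end LinearProgram

theorem LipschitzWith.comp_add_smul {E F : Type*} [SeminormedAddCommGroup E] [NormedSpace ℝ E]
    [PseudoMetricSpace F] {f : E → F} {K : ℝ≥0} (hf : LipschitzWith K f) (θ v : E) :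
    LipschitzWith (K * ‖v‖₊) fun t : ℝ => f (θ + t • v) := by
  refine hf.comp (LipschitzWith.of_dist_le_mul fun t t' => ?_)
  rw [dist_add_left, dist_eq_norm, ← sub_smul, norm_smul, mul_comm, Real.dist_eq,
    Real.norm_eq_abs, coe_nnnorm]

theorem hasDerivAt_integral_of_lipschitzWith {Ω E : Type*} [MeasurableSpace Ω] {μ : Measure Ω}
    [IsFiniteMeasure μ] [NormedAddCommGroup E] [NormedSpace ℝ E] {F : ℝ → Ω → E} {F' : Ω → E}
    {K : ℝ≥0} {e₀ ε : ℝ} (hF_meas : ∀ e, AEStronglyMeasurable (F e) μ)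
    (hF_int : Integrable (F e₀) μ) (hF'_meas : AEStronglyMeasurable F' μ)
    (hF_lip : ∀ ω, LipschitzWith K (F · ω)) (hF' : ∀ᵐ ω ∂μ, HasDerivAt (F · ω) (F' ω) ε) :
    HasDerivAt (fun e => ∫ ω, F e ω ∂μ) (∫ ω, F' ω ∂μ) ε := by
  have hF_int_ε : Integrable (F ε) μ := by
    refine (hF_int.norm.add (integrable_const (K * dist ε e₀))).mono' (hF_meas ε)
      (ae_of_all _ fun ω => ?_)
    calc ‖F ε ω‖ ≤ ‖F e₀ ω‖ + ‖F ε ω - F e₀ ω‖ := norm_le_norm_add_norm_sub' _ _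
      _ ≤ ‖F e₀ ω‖ + K * dist ε e₀ := by
        gcongr; exact dist_eq_norm (F ε ω) _ ▸ (hF_lip ω).dist_le_mul ε e₀
  refine (hasDerivAt_integral_of_dominated_loc_of_lip (bound := fun _ => K) univ_mem
    (Eventually.of_forall hF_meas) hF_int_ε hF'_meas (ae_of_all _ fun ω => ?_)
    (integrable_const _) hF').2
  simpa using hF_lip ω

/-- **Envelope differentiation step of the perturbation method.**
Over the polytope `P = conv S` (`S` finite), with `g` continuously differentiable with
bounded derivative and `δ` a bounded random vector, if for every `ε` in the open interval
`(a, b)` the linear objective `y ↦ ⟨y, g(θ* + ε δ(ω))⟩` has a.s. a unique minimizer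
`x(θ* + ε δ(ω))` over `P`, then `φ(ε) = E[min_{y ∈ P} ⟨y, g(θ* + εδ)⟩]` is differentiable
at every `ε ∈ (a, b)` with `φ'(ε) = E[⟨x(θ* + εδ), Dg(θ* + εδ) δ⟩]`. -/
theorem perturbation_envelope_derivative
    {m p : ℕ} {Ω : Type*} [MeasurableSpace Ω] (μ : Measure Ω) [IsProbabilityMeasure μ]
    (S : Set (EuclideanSpace ℝ (Fin m))) (hS : S.Finite)
    (θ : EuclideanSpace ℝ (Fin p))
    (g : EuclideanSpace ℝ (Fin p) → EuclideanSpace ℝ (Fin m))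
    (hg : ContDiff ℝ 1 g) (M : ℝ) (hgM : ∀ ϑ, ‖fderiv ℝ g ϑ‖ ≤ M)
    (δ : Ω → EuclideanSpace ℝ (Fin p)) (hδm : Measurable δ)
    (Mδ : ℝ) (hδb : ∀ ω, ‖δ ω‖ ≤ Mδ)
    (a b : ℝ)
    (x : EuclideanSpace ℝ (Fin p) → EuclideanSpace ℝ (Fin m)) (hxm : Measurable x)
    (hx : ∀ ε ∈ Set.Ioo a b, ∀ᵐ ω ∂μ,
      x (θ + ε • δ ω) ∈ convexHull ℝ S ∧
        (∀ y ∈ convexHull ℝ S,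
          ⟪x (θ + ε • δ ω), g (θ + ε • δ ω)⟫ ≤ ⟪y, g (θ + ε • δ ω)⟫) ∧
        ∀ y ∈ convexHull ℝ S,
          (∀ z ∈ convexHull ℝ S, ⟪y, g (θ + ε • δ ω)⟫ ≤ ⟪z, g (θ + ε • δ ω)⟫) →
            y = x (θ + ε • δ ω)) :
    ∀ ε ∈ Set.Ioo a b,
      HasDerivAt
        (fun e : ℝ =>
          ∫ ω, sInf ((fun y => ⟪y, g (θ + e • δ ω)⟫) '' convexHull ℝ S) ∂μ)
        (∫ ω, ⟪x (θ + ε • δ ω), fderiv ℝ g (θ + ε • δ ω) (δ ω)⟫ ∂μ) ε := by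
  intro ε hε
  set V := infInner (convexHull ℝ S)
  obtain ⟨R, hR⟩ := isBounded_iff_forall_norm_le.1 hS.isBounded
  have hV : LipschitzWith R.toNNReal V :=
    lipschitzWith_infInner_convexHull hS fun s hs => (hR s hs).trans (Real.le_coe_toNNReal R)
  have hg_diff := hg.differentiable one_ne_zero
  have hg_lip : LipschitzWith M.toNNReal g :=
    lipschitzWith_of_nnnorm_fderiv_le hg_diff fun ϑ => by
      simpa using Real.toNNReal_le_toNNReal (hgM ϑ)
  have hline : ∀ e : ℝ, Measurable fun ω => θ + e • δ ω := fun e => by fun_prop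
  have hF_lip : ∀ ω, LipschitzWith (R.toNNReal * M.toNNReal * Mδ.toNNReal)
      fun e : ℝ => V (g (θ + e • δ ω)) := fun ω =>
    ((hV.comp hg_lip).comp_add_smul θ (δ ω)).weaken <| by
      gcongr
      simpa using Real.toNNReal_le_toNNReal (hδb ω)
  have hF'_meas : AEStronglyMeasurable
      (fun ω => ⟪x (θ + ε • δ ω), fderiv ℝ g (θ + ε • δ ω) (δ ω)⟫) μ := by
    have hDg : Continuous fun q : EuclideanSpace ℝ (Fin p) × EuclideanSpace ℝ (Fin p) =>
        fderiv ℝ g q.1 q.2 :=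
      ((hg.continuous_fderiv one_ne_zero).comp continuous_fst).clm_apply continuous_snd
    exact ((hxm.comp (hline ε)).inner (hDg.measurable.comp ((hline ε).prodMk hδm)))
      |>.aestronglyMeasurable
  have hF' : ∀ᵐ ω ∂μ, HasDerivAt (fun e : ℝ => V (g (θ + e • δ ω)))
      ⟪x (θ + ε • δ ω), fderiv ℝ g (θ + ε • δ ω) (δ ω)⟫ ε := by
    filter_upwards [hx ε hε] with ω ⟨hmem, hmin, huniq⟩
    have hV' := hasFDerivAt_infInner_convexHull hS hmem (isMinOn_iff.2 hmin)
      fun y hy hy_min => huniq y hy (isMinOn_iff.1 hy_min)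
    have hline' : HasDerivAt (fun e : ℝ => θ + e • δ ω) (δ ω) ε := by
      simpa using ((hasDerivAt_id ε).smul_const (δ ω)).const_add θ
    simpa [Function.comp_def] using
      (hV'.comp _ (hg_diff _).hasFDerivAt).comp_hasDerivAt ε hline'
  exact hasDerivAt_integral_of_lipschitzWith (e₀ := 0)
    (fun e => ((hV.comp hg_lip).continuous.measurable.comp (hline e)).aestronglyMeasurable)
    (by simp) hF'_meas hF_lip hF'
end

section
/- Let S ⊆ ℝ^m be a finite set, P = conv(S), θ* ∈ ℝ^p, and g : ℝ^p → ℝ^m twice continuously differentiable with bounded first and second derivatives. Let δ : Ω → ℝ^p be a bounded measurable random vector and let I be an open interval containing 0 such that for every ε ∈ I and almost every ω the linear objective x ↦ ⟨x, g(θ* + εδ(ω))⟩ has a unique minimizer x(θ* + εδ(ω)) over P. Define η(ε) = E[ ⟨ x(θ* + εδ), g(θ*) ⟩ ] and φ(ε) = E[ ⟨ x(θ* + εδ), g(θ* + εδ) ⟩ ]. Then φ is differentiable on I and η(ε) = φ(ε) − ε·φ'(ε) + O(ε²) as ε → 0; i.e., there exist C > 0 and ε₀ > 0 with [−ε₀,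 ε₀] ⊆ I such that |η(ε) − φ(ε) + ε φ'(ε)| ≤ C ε² for all |ε| ≤ ε₀. (Proposition 1 of the paper, the perturbation-method identity for nonlinear prediction models.) -/
/-!
Write `V(c) = min_{s ∈ S} ⟪s, c⟫` for the optimal value of the linear program over `conv S`.
`V` is Lipschitz, and where the minimizer `x(c)` is unique only one vertex is active near `c`,
so `V` is differentiable there with gradient `x(c)`. Hence `φ(ε) = E[V(g(θ* + εδ))]` can be
differentiated under the expectation (dominated by the Lipschitz constant), giving
`φ'(ε) = E⟪x, Dg(θ* + εδ) δ⟫`. Then `η - φ + ε φ'` is the expectation of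
`⟪x, g(θ*) - g(θ* + εδ) + ε Dg(θ* + εδ) δ⟫`, a first-order Taylor remainder of `g`, which is
`O(ε²)` because `Dg` is Lipschitz and `x`, `δ` are bounded.
-/

open MeasureTheory RealInnerProductSpace Filter Topology
open scoped NNReal

def IsUniqueMinOn {α β : Type*} [Preorder β] (f : α → β) (s : Set α) (a : α) : Prop :=
  a ∈ s ∧ IsMinOn f s a ∧ ∀ b ∈ s, IsMinOn f s b → b = a

theorem LipschitzWith.finset_inf' {α ι : Type*} [PseudoEMetricSpace α] {t : Finset ι}
    (ht : t.Nonempty) {f : ι → α → ℝ} {K : ℝ≥0} (hf : ∀ i ∈ t, LipschitzWith K (f i)) :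
    LipschitzWith K fun x => t.inf' ht (f · x) := by
  induction ht using Finset.Nonempty.cons_induction with
  | singleton i => simpa using hf i (by simp)
  | cons i s hi hs ih =>
    simp only [Finset.inf'_cons hs]
    simpa using (hf i (by simp)).min (ih fun j hj => hf j (by simp [hj]))

theorem Finset.inf'_eventuallyEq_of_forall_lt {X ι α : Type*} [TopologicalSpace X]
    [LinearOrder α] [TopologicalSpace α] [OrderClosedTopology α] {t : Finset ι}
    (ht : t.Nonempty) {f : ι → X → α} {x₀ : X} {i₀ : ι} (hi₀ : i₀ ∈ t)
    (hf : ∀ i ∈ t, ContinuousAt (f i) x₀) (hlt : ∀ i ∈ t, i ≠ i₀ → f i₀ x₀ < f i x₀) :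
    (fun x => t.inf' ht (f · x)) =ᶠ[𝓝 x₀] f i₀ := by
  have hle : ∀ i ∈ t, ∀ᶠ x in 𝓝 x₀, f i₀ x ≤ f i x := by
    intro i hi
    rcases eq_or_ne i i₀ with rfl | hne
    · exact Eventually.of_forall fun _ => le_rfl
    · exact ((hf i₀ hi₀).eventually_lt (hf i hi) (hlt i hi hne)).mono fun _ => le_of_lt
  filter_upwards [t.eventually_all.2 hle] with x hx
  exact le_antisymm (Finset.inf'_le _ hi₀) (Finset.le_inf' ht _ hx)

section MinInner

variable {E : Type*} [NormedAddCommGroup E] [InnerProductSpace ℝ E]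

theorem exists_mem_inner_le_of_mem_convexHull {S : Set E} {x : E} (hx : x ∈ convexHull ℝ S)
    (c : E) : ∃ s ∈ S, ⟪s, c⟫ ≤ ⟪x, c⟫ := by
  simpa only [ContinuousLinearMap.coe_coe, innerSL_apply_apply, real_inner_comm c] using
    ((innerSL ℝ c).toLinearMap.concaveOn convex_univ).exists_le_of_mem_convexHull
      (Set.subset_univ S) hx

theorem IsUniqueMinOn.mem_of_convexHull {S : Set E} {c x : E}
    (hx : IsUniqueMinOn (⟪·, c⟫) (convexHull ℝ S) x) : x ∈ S := by
  obtain ⟨s, hs, hsx⟩ := exists_mem_inner_le_of_mem_convexHull hx.1 c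
  have hsmin : IsMinOn (⟪·, c⟫) (convexHull ℝ S) s :=
    isMinOn_iff.2 fun y hy => hsx.trans (isMinOn_iff.1 hx.2.1 y hy)
  rwa [← hx.2.2 s (subset_convexHull ℝ S hs) hsmin]

theorem norm_le_sup_nnnorm_of_mem_convexHull {t : Finset E} {x : E}
    (hx : x ∈ convexHull ℝ ↑t) : ‖x‖ ≤ t.sup (‖·‖₊) := by
  obtain ⟨s, hs, hxs⟩ := convexOn_univ_norm.exists_ge_of_mem_convexHull (Set.subset_univ _) hx
  exact hxs.trans (NNReal.coe_le_coe.2 (Finset.le_sup (f := (‖·‖₊)) hs))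

namespace Finset

/-- The optimal value `min_{y ∈ conv t} ⟪y, c⟫` of the linear program over `conv t`. -/
noncomputable def minInner (t : Finset E) (ht : t.Nonempty) (c : E) : ℝ :=
  t.inf' ht fun s => ⟪s, c⟫

variable (t : Finset E) (ht : t.Nonempty)

theorem minInner_eq_inner {c x : E} (hx : x ∈ convexHull ℝ ↑t)
    (hmin : IsMinOn (⟪·, c⟫) (convexHull ℝ ↑t) x) : t.minInner ht c = ⟪x, c⟫ := by
  obtain ⟨s, hs, hsx⟩ := exists_mem_inner_le_of_mem_convexHull hx c
  exact le_antisymm ((inf'_le _ hs).trans hsx)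
    (le_inf' ht _ fun s hs => isMinOn_iff.1 hmin s (subset_convexHull ℝ _ hs))

theorem lipschitzWith_minInner : LipschitzWith (t.sup (‖·‖₊)) (t.minInner ht) :=
  LipschitzWith.finset_inf' ht fun s hs =>
    LipschitzWith.of_dist_le_mul fun c c' => by
      rw [dist_eq_norm, dist_eq_norm, ← inner_sub_right]
      exact (norm_inner_le_norm _ _).trans
        (mul_le_mul_of_nonneg_right (NNReal.coe_le_coe.2 (le_sup (f := (‖·‖₊)) hs))
          (norm_nonneg _))

theorem minInner_zero : t.minInner ht 0 = 0 := by
  simp [minInner]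

theorem hasFDerivAt_minInner {c x : E} (hx : IsUniqueMinOn (⟪·, c⟫) (convexHull ℝ ↑t) x) :
    HasFDerivAt (t.minInner ht) (innerSL ℝ x) c := by
  refine (innerSL ℝ x).hasFDerivAt.congr_of_eventuallyEq ?_
  refine inf'_eventuallyEq_of_forall_lt ht (f := fun s c => ⟪s, c⟫) hx.mem_of_convexHull
    (fun s _ => (innerSL ℝ s).continuous.continuousAt) fun s hs hne => ?_
  have hs' := subset_convexHull ℝ _ hs
  refine lt_of_le_of_ne (isMinOn_iff.1 hx.2.1 s hs') fun h => hne ?_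
  exact hx.2.2 s hs' (isMinOn_iff.2 fun y hy => h ▸ isMinOn_iff.1 hx.2.1 y hy)

end Finset

end MinInner

section Envelope

variable {Ω E : Type*} [MeasurableSpace Ω] {μ : Measure Ω} [NormedAddCommGroup E]
  [InnerProductSpace ℝ E]

theorem MeasureTheory.Integrable.inner_of_norm_le_left {u v : Ω → E} {R : ℝ} (hv : Integrable v μ)
    (hu : AEStronglyMeasurable u μ) (huR : ∀ᵐ ω ∂μ, ‖u ω‖ ≤ R) :
    Integrable (fun ω => ⟪u ω, v ω⟫) μ :=
  (hv.norm.const_mul R).mono' (hu.inner hv.1) <| huR.mono fun _ h =>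
    (norm_inner_le_norm _ _).trans (mul_le_mul_of_nonneg_right h (norm_nonneg _))

theorem hasDerivAt_integral_minInner [IsFiniteMeasure μ] {t : Finset E} (ht : t.Nonempty)
    {c : ℝ → Ω → E} {c' u : Ω → E} {K : ℝ≥0} {ε : ℝ}
    (hc : ∀ e, AEStronglyMeasurable (c e) μ) (hcε : Integrable (c ε) μ)
    (hcL : ∀ ω, LipschitzWith K (c · ω)) (hc' : ∀ ω, HasDerivAt (c · ω) (c' ω) ε)
    (hc'm : AEStronglyMeasurable c' μ) (hum : AEStronglyMeasurable u μ)
    (hu : ∀ᵐ ω ∂μ, IsUniqueMinOn (⟪·, c ε ω⟫) (convexHull ℝ ↑t) (u ω)) :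
    HasDerivAt (fun e => ∫ ω, t.minInner ht (c e ω) ∂μ) (∫ ω, ⟪u ω, c' ω⟫ ∂μ) ε := by
  have hV := t.lipschitzWith_minInner ht
  have hVc : ∀ e, AEStronglyMeasurable (fun ω => t.minInner ht (c e ω)) μ := fun e =>
    hV.continuous.comp_aestronglyMeasurable (hc e)
  have hVε : Integrable (fun ω => t.minInner ht (c ε ω)) μ :=
    (hcε.norm.const_mul _).mono' (hVc ε) <| Eventually.of_forall fun ω =>
      hV.norm_le_mul (t.minInner_zero ht) _
  refine (hasDerivAt_integral_of_dominated_loc_of_lip (bound := fun _ => t.sup (‖·‖₊) * K)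
    univ_mem (Eventually.of_forall hVc) hVε (hum.inner hc'm)
    (Eventually.of_forall fun ω => ?_) (integrable_const _) (hu.mono fun ω hω => ?_)).2
  · simpa [Function.comp_def] using (hV.comp (hcL ω)).lipschitzOnWith (s := Set.univ)
  · simpa [Function.comp_def] using (t.hasFDerivAt_minInner ht hω).comp_hasDerivAt ε (hc' ω)

end Envelope

section Perturbation

variable {Ω E P F : Type*} [MeasurableSpace Ω] {μ : Measure Ω} [NormedAddCommGroup E]
  [InnerProductSpace ℝ E] [NormedAddCommGroup P] [NormedSpace ℝ P] [NormedAddCommGroup F]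

theorem LipschitzWith.comp_add_smul_s13 {g : P → F} {K : ℝ≥0} (hg : LipschitzWith K g) (θ v : P) :
    LipschitzWith (K * ‖v‖₊) fun e : ℝ => g (θ + e • v) :=
  hg.comp <| LipschitzWith.of_dist_le_mul fun e e' => by
    simp [dist_eq_norm, ← sub_smul, norm_smul, mul_comm]

theorem LipschitzWith.integrable_comp_add_smul [IsFiniteMeasure μ] {g : P → F} {K : ℝ≥0}
    (hg : LipschitzWith K g) (θ : P) {δ : Ω → P} (hδ : AEStronglyMeasurable δ μ) {Mδ : ℝ}
    (hδb : ∀ ω, ‖δ ω‖ ≤ Mδ) (e : ℝ) : Integrable (fun ω => g (θ + e • δ ω)) μ := by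
  refine .of_bound (hg.continuous.comp_aestronglyMeasurable
    ((continuous_const.add (continuous_const_smul e)).comp_aestronglyMeasurable hδ))
    (‖g θ‖ + K * (|e| * Mδ)) (Eventually.of_forall fun ω => ?_)
  calc ‖g (θ + e • δ ω)‖ ≤ ‖g θ‖ + ‖g (θ + e • δ ω) - g θ‖ := norm_le_norm_add_norm_sub' _ _
    _ ≤ ‖g θ‖ + K * ‖e • δ ω‖ := by
      simpa [dist_eq_norm] using hg.dist_le_mul (θ + e • δ ω) θ
    _ ≤ ‖g θ‖ + K * (|e| * Mδ) := by
      rw [norm_smul, Real.norm_eq_abs]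
      gcongr
      exact hδb ω

variable [NormedSpace ℝ F]

theorem norm_sub_sub_fderiv_le {f : P → F} {K : ℝ≥0} (hf : Differentiable ℝ f)
    (hf' : LipschitzWith K (fderiv ℝ f)) (x y : P) :
    ‖f y - f x - fderiv ℝ f x (y - x)‖ ≤ K * ‖y - x‖ ^ 2 := by
  have hmvt := (convex_closedBall x ‖y - x‖).norm_image_sub_le_of_norm_fderiv_le'
    (fun z _ => hf z) (fun z hz => by
      rw [← dist_eq_norm]
      exact (hf'.dist_le_mul z x).trans (mul_le_mul_of_nonneg_left hz K.2))
    (Metric.mem_closedBall_self (norm_nonneg _))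
    (show y ∈ Metric.closedBall x ‖y - x‖ by simp [dist_eq_norm])
  rwa [mul_assoc, ← sq] at hmvt

theorem hasDerivAt_comp_add_smul {g : P → F} {θ v : P} {e : ℝ}
    (hg : DifferentiableAt ℝ g (θ + e • v)) :
    HasDerivAt (fun e => g (θ + e • v)) (fderiv ℝ g (θ + e • v) v) e := by
  simpa [Function.comp_def] using
    hg.hasFDerivAt.comp_hasDerivAt e (((hasDerivAt_id e).smul_const v).const_add θ)

theorem aestronglyMeasurable_fderiv_comp_add_smul {g : P → F}
    (hg' : Continuous (fderiv ℝ g)) (θ : P) {δ : Ω → P} (hδ : AEStronglyMeasurable δ μ) (e : ℝ) :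
    AEStronglyMeasurable (fun ω => fderiv ℝ g (θ + e • δ ω) (δ ω)) μ :=
  ((hg'.comp (continuous_const.add (continuous_const_smul e))).clm_apply
    continuous_id).comp_aestronglyMeasurable hδ

end Perturbation

section PerturbedCost

variable {Ω E P : Type*} [MeasurableSpace Ω] {μ : Measure Ω} [IsProbabilityMeasure μ]
  [NormedAddCommGroup E] [InnerProductSpace ℝ E] [NormedAddCommGroup P] [NormedSpace ℝ P]
  {g : P → E} {θ : P} {δ : Ω → P} {Mδ : ℝ≥0}

theorem hasDerivAt_integral_inner_perturbed {t : Finset E} {K : ℝ≥0} (hg : Differentiable ℝ g)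
    (hgL : LipschitzWith K g) (hg' : Continuous (fderiv ℝ g)) (hδ : AEStronglyMeasurable δ μ)
    (hδb : ∀ ω, ‖δ ω‖ ≤ Mδ) {x : P → E} {ε : ℝ}
    (hxm : AEStronglyMeasurable (fun ω => x (θ + ε • δ ω)) μ)
    (hx : ∀ᶠ e in 𝓝 ε, ∀ᵐ ω ∂μ,
      IsUniqueMinOn (⟪·, g (θ + e • δ ω)⟫) (convexHull ℝ ↑t) (x (θ + e • δ ω))) :
    HasDerivAt (fun e => ∫ ω, ⟪x (θ + e • δ ω), g (θ + e • δ ω)⟫ ∂μ)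
      (∫ ω, ⟪x (θ + ε • δ ω), fderiv ℝ g (θ + ε • δ ω) (δ ω)⟫ ∂μ) ε := by
  obtain ⟨ω₀, hω₀⟩ := hx.self_of_nhds.exists
  have ht : t.Nonempty := Finset.coe_nonempty.1 (convexHull_nonempty_iff.1 ⟨_, hω₀.1⟩)
  have hline : ∀ e : ℝ, AEStronglyMeasurable (fun ω => θ + e • δ ω) μ := fun e =>
    (continuous_const.add (continuous_const_smul e)).comp_aestronglyMeasurable hδ
  have hV := hasDerivAt_integral_minInner ht (K := K * Mδ)
    (fun e => hg.continuous.comp_aestronglyMeasurable (hline e))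
    (hgL.integrable_comp_add_smul θ hδ hδb ε)
    (fun ω => (hgL.comp_add_smul_s13 θ (δ ω)).weaken (by gcongr; exact_mod_cast hδb ω))
    (fun ω => hasDerivAt_comp_add_smul (hg _))
    (aestronglyMeasurable_fderiv_comp_add_smul hg' θ hδ ε) hxm hx.self_of_nhds
  refine hV.congr_of_eventuallyEq ?_
  filter_upwards [hx] with e he
  exact integral_congr_ae (he.mono fun ω hω => (t.minInner_eq_inner ht hω.1 hω.2.1).symm)

theorem abs_integral_inner_taylor_remainder_le {K₀ K : ℝ≥0} (hg : Differentiable ℝ g)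
    (hgL : LipschitzWith K₀ g) (hg'L : LipschitzWith K (fderiv ℝ g))
    (hδ : AEStronglyMeasurable δ μ) (hδb : ∀ ω, ‖δ ω‖ ≤ Mδ) {u : Ω → E}
    (hu : AEStronglyMeasurable u μ) {R : ℝ} (huR : ∀ᵐ ω ∂μ, ‖u ω‖ ≤ R) (ε : ℝ) :
    |∫ ω, ⟪u ω, g θ⟫ ∂μ - ∫ ω, ⟪u ω, g (θ + ε • δ ω)⟫ ∂μ
        + ε * ∫ ω, ⟪u ω, fderiv ℝ g (θ + ε • δ ω) (δ ω)⟫ ∂μ| ≤ R * K * Mδ ^ 2 * ε ^ 2 := by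
  have hA := (integrable_const (g θ)).inner_of_norm_le_left hu huR
  have hB := (hgL.integrable_comp_add_smul θ hδ hδb ε).inner_of_norm_le_left hu huR
  have hD : Integrable (fun ω => ⟪u ω, fderiv ℝ g (θ + ε • δ ω) (δ ω)⟫) μ := by
    refine Integrable.inner_of_norm_le_left (.of_bound
      (aestronglyMeasurable_fderiv_comp_add_smul hg'L.continuous θ hδ ε) (K₀ * Mδ)
      (Eventually.of_forall fun ω => ?_)) hu huR
    exact (ContinuousLinearMap.le_opNorm _ _).trans
      (mul_le_mul (norm_fderiv_le_of_lipschitz ℝ hgL) (hδb ω) (norm_nonneg _) K₀.2)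
  rw [← integral_sub hA hB, ← integral_const_mul,
    ← integral_add (f := fun ω => _ - _) (hA.sub hB) (hD.const_mul ε)]
  have hpt : ∀ᵐ ω ∂μ, ‖⟪u ω, g θ⟫ - ⟪u ω, g (θ + ε • δ ω)⟫
      + ε * ⟪u ω, fderiv ℝ g (θ + ε • δ ω) (δ ω)⟫‖ ≤ R * K * Mδ ^ 2 * ε ^ 2 := by
    filter_upwards [huR] with ω hω
    set ϑ := θ + ε • δ ω
    have hstep : θ - ϑ = -(ε • δ ω) := by simp [ϑ]
    calc ‖⟪u ω, g θ⟫ - ⟪u ω, g ϑ⟫ + ε * ⟪u ω, fderiv ℝ g ϑ (δ ω)⟫‖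
        = ‖⟪u ω, g θ - g ϑ - fderiv ℝ g ϑ (θ - ϑ)⟫‖ := by
          rw [hstep, map_neg, map_smul, inner_sub_right, inner_sub_right, inner_neg_right,
            real_inner_smul_right, sub_neg_eq_add]
      _ ≤ ‖u ω‖ * (K * ‖θ - ϑ‖ ^ 2) :=
          (norm_inner_le_norm _ _).trans
            (mul_le_mul_of_nonneg_left (norm_sub_sub_fderiv_le hg hg'L _ _) (norm_nonneg _))
      _ ≤ R * (K * (|ε| * Mδ) ^ 2) := by
          rw [hstep, norm_neg, norm_smul, Real.norm_eq_abs]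
          have hR : 0 ≤ R := (norm_nonneg _).trans hω
          gcongr
          exact hδb ω
      _ = R * K * Mδ ^ 2 * ε ^ 2 := by rw [mul_pow, sq_abs]; ring
  simpa using norm_integral_le_of_norm_le_const hpt

end PerturbedCost

/-- **Proposition 1: the perturbation-method identity for nonlinear prediction models.**
Over the polytope `P = conv S` (`S` finite), with `g` twice continuously differentiable
with bounded first and second derivatives, `δ` a bounded random vector, and a.s.-unique
minimizers `x(θ* + εδ(ω))` of `y ↦ ⟨y, g(θ* + εδ(ω))⟩` over `P` for `ε` in an open
interval `I ∋ 0`, the functions `η(ε) = E[⟨x(θ* + εδ), g(θ*)⟩]` and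
`φ(ε) = E[⟨x(θ* + εδ), g(θ* + εδ)⟩]` satisfy: `φ` is differentiable on `I` and
`η(ε) = φ(ε) − ε φ'(ε) + O(ε²)`. -/
theorem perturbation_method_identity
    {m p : ℕ} {Ω : Type*} [MeasurableSpace Ω] (μ : Measure Ω) [IsProbabilityMeasure μ]
    (S : Set (EuclideanSpace ℝ (Fin m))) (hS : S.Finite)
    (θ : EuclideanSpace ℝ (Fin p))
    (g : EuclideanSpace ℝ (Fin p) → EuclideanSpace ℝ (Fin m))
    (hg : ContDiff ℝ 2 g) (M : ℝ)
    (hgM : ∀ ϑ, ‖fderiv ℝ g ϑ‖ ≤ M ∧ ‖fderiv ℝ (fderiv ℝ g) ϑ‖ ≤ M)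
    (δ : Ω → EuclideanSpace ℝ (Fin p)) (hδm : Measurable δ)
    (Mδ : ℝ) (hδb : ∀ ω, ‖δ ω‖ ≤ Mδ)
    (a b : ℝ) (h0 : (0 : ℝ) ∈ Set.Ioo a b)
    (x : EuclideanSpace ℝ (Fin p) → EuclideanSpace ℝ (Fin m)) (hxm : Measurable x)
    (hx : ∀ ε ∈ Set.Ioo a b, ∀ᵐ ω ∂μ,
      x (θ + ε • δ ω) ∈ convexHull ℝ S ∧
        (∀ y ∈ convexHull ℝ S,
          ⟪x (θ + ε • δ ω), g (θ + ε • δ ω)⟫ ≤ ⟪y, g (θ + ε • δ ω)⟫) ∧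
        ∀ y ∈ convexHull ℝ S,
          (∀ z ∈ convexHull ℝ S, ⟪y, g (θ + ε • δ ω)⟫ ≤ ⟪z, g (θ + ε • δ ω)⟫) →
            y = x (θ + ε • δ ω)) :
    (∀ ε ∈ Set.Ioo a b,
      DifferentiableAt ℝ
        (fun e : ℝ => ∫ ω, ⟪x (θ + e • δ ω), g (θ + e • δ ω)⟫ ∂μ) ε) ∧
      ∃ C > (0 : ℝ), ∃ ε₀ > (0 : ℝ), Set.Icc (-ε₀) ε₀ ⊆ Set.Ioo a b ∧
        ∀ ε : ℝ, |ε| ≤ ε₀ →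
          |(∫ ω, ⟪x (θ + ε • δ ω), g θ⟫ ∂μ)
              - (∫ ω, ⟪x (θ + ε • δ ω), g (θ + ε • δ ω)⟫ ∂μ)
              + ε * deriv (fun e : ℝ => ∫ ω, ⟪x (θ + e • δ ω), g (θ + e • δ ω)⟫ ∂μ) ε|
            ≤ C * ε ^ 2 := by
  lift S to Finset (EuclideanSpace ℝ (Fin m)) using hS with t
  obtain ⟨ω₀, hω₀⟩ := (hx 0 h0).exists
  lift M to ℝ≥0 using (norm_nonneg _).trans (hgM 0).1
  lift Mδ to ℝ≥0 using (norm_nonneg _).trans (hδb ω₀)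
  have hgd : Differentiable ℝ g := hg.differentiable (by norm_num)
  have hgL : LipschitzWith M g :=
    lipschitzWith_of_nnnorm_fderiv_le hgd fun ϑ => NNReal.coe_le_coe.1 (hgM ϑ).1
  have hg'L : LipschitzWith M (fderiv ℝ g) :=
    lipschitzWith_of_nnnorm_fderiv_le ((hg.fderiv_right le_rfl).differentiable one_ne_zero)
      fun ϑ => NNReal.coe_le_coe.1 (hgM ϑ).2
  have hxε : ∀ ε : ℝ, AEStronglyMeasurable (fun ω => x (θ + ε • δ ω)) μ := fun ε =>
    (hxm.comp (measurable_const.add (hδm.const_smul ε))).aestronglyMeasurable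
  have hφ : ∀ ε ∈ Set.Ioo a b, HasDerivAt
      (fun e : ℝ => ∫ ω, ⟪x (θ + e • δ ω), g (θ + e • δ ω)⟫ ∂μ)
      (∫ ω, ⟪x (θ + ε • δ ω), fderiv ℝ g (θ + ε • δ ω) (δ ω)⟫ ∂μ) ε := fun ε hε =>
    hasDerivAt_integral_inner_perturbed hgd hgL hg'L.continuous hδm.aestronglyMeasurable hδb
      (hxε ε) (eventually_of_mem (Ioo_mem_nhds hε.1 hε.2) hx)
  obtain ⟨ε₀, hε₀, hball⟩ := Metric.nhds_basis_closedBall.mem_iff.1 (Ioo_mem_nhds h0.1 h0.2)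
  refine ⟨fun ε hε => (hφ ε hε).differentiableAt, t.sup (‖·‖₊) * M * Mδ ^ 2 + 1, by positivity,
    ε₀, hε₀, by simpa [Real.closedBall_eq_Icc] using hball, fun ε hε => ?_⟩
  have hεI : ε ∈ Set.Ioo a b := hball (by simpa using hε)
  rw [(hφ ε hεI).deriv]
  refine (abs_integral_inner_taylor_remainder_le hgd hgL hg'L hδm.aestronglyMeasurable hδb
    (hxε ε) ((hx ε hεI).mono fun ω hω => norm_le_sup_nnnorm_of_mem_convexHull hω.1) ε).trans ?_
  nlinarith [sq_nonneg ε]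
end
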